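/- A relative ideal I of a numerical semigroup S is almost canonical if and only if for every x ∈ PF(I) \ {F(I)} one has F(I) − x ∈ PF(S). -/

import Mathlib

open Set Pointwise

def IsNumSgrp (S : Set ℤ) : Prop :=
  0 ∈ S ∧ (∀ a ∈ S, ∀ b ∈ S, a + b ∈ S) ∧ (∀ a ∈ S, 0 ≤ a) ∧ ∃ c : ℤ, ∀ z, c ≤ z → z ∈ S

def maxId (S : Set ℤ) : Set ℤ := S \ {0}

def subI (I J : Set ℤ) : Set ℤ := {x : ℤ | ∀ j ∈ J, x + j ∈ I}

def PF (S I : Set ℤ) : Set ℤ := subI I (maxId S) \ I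

def stdK (S : Set ℤ) (F : ℤ) : Set ℤ := {x : ℤ | 0 ≤ x ∧ F - x ∉ S}

def IsFrobOf (I : Set ℤ) (FI : ℤ) : Prop := FI ∉ I ∧ ∀ z : ℤ, FI < z → z ∈ I

def IsRelIdeal (S I : Set ℤ) : Prop :=
  I.Nonempty ∧ (∀ i ∈ I, ∀ s ∈ S, i + s ∈ I) ∧ ∃ z ∈ S, ∀ i ∈ I, z + i ∈ S

def tilde (I : Set ℤ) (d : ℤ) : Set ℤ := (fun x => x + d) '' I

def IsAlmostCanonical (S : Set ℤ) (F : ℤ) (I : Set ℤ) : Prop :=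
  ∃ FI : ℤ, IsFrobOf I FI ∧ subI (tilde I (F - FI)) (maxId S) = stdK S F ∪ {F}

def IsMinGen (S : Set ℤ) (x : ℤ) : Prop := x ∈ maxId S \ (maxId S + maxId S)

def IsMult (S : Set ℤ) (e : ℤ) : Prop := e ∈ maxId S ∧ ∀ m ∈ maxId S, e ≤ m

def genK (S : Set ℤ) (F : ℤ) : Set ℤ := (AddSubmonoid.closure (stdK S F) : Set ℤ)

def nK (K : Set ℤ) : ℕ → Set ℤ
  | 0 => {0}
  | 1 => K
  | n + 2 => nK K (n + 1) + K

def IsGAS (S : Set ℤ) (F : ℤ) : Prop :=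
  stdK S F + stdK S F = stdK S F ∨
  ∃ X : Finset ℤ, (∀ x ∈ X, IsMinGen S x) ∧ (∀ x ∈ X, ∀ y ∈ X, x - y ∉ PF S S) ∧
    (stdK S F + stdK S F) \ stdK S F = (fun x => F - x) '' (X : Set ℤ) ∪ {F}

def IsAlmostSym (S : Set ℤ) (F : ℤ) : Prop := subI S (maxId S) = stdK S F ∪ {F}

def apery (I : Set ℤ) (e : ℤ) : Set ℤ := {i ∈ I | i - e ∉ I}

/-!
Translating `I` by `F - F(I)` gives an ideal `J` with Frobenius number `F`, and both sides of the
equivalence are invariant under this. Since `K ∪ {F} = {w | F - w ∉ M}`, the inclusion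
`J - M ⊆ K ∪ {F}` always holds, and the reverse one says that `F - y ∈ S - M` for every gap `y`
of `J`. This follows from its instances at `y ∈ PF(J) \ {F}` by downward induction on `y`: a gap
outside `PF(J)` has a larger gap `y + m` with `m ∈ M`, and `S - M` is closed under adding `M`.
-/

lemma IsFrobOf.unique {I : Set ℤ} {a b : ℤ} (ha : IsFrobOf I a) (hb : IsFrobOf I b) : a = b := by
  by_contra hne
  rcases Ne.lt_or_gt hne with h | h
  · exact hb.1 (ha.2 b h)
  · exact ha.1 (hb.2 a h)

section Tilde

variable {I : Set ℤ} {d : ℤ}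

lemma mem_tilde {z : ℤ} : z ∈ tilde I d ↔ z - d ∈ I :=
  ⟨by rintro ⟨i, hi, rfl⟩; simpa using hi, fun h => ⟨z - d, h, by ring⟩⟩

lemma add_mem_tilde {x : ℤ} : x + d ∈ tilde I d ↔ x ∈ I := by
  rw [mem_tilde, add_sub_cancel_right]

lemma IsFrobOf.tilde {FI : ℤ} (hFI : IsFrobOf I FI) : IsFrobOf (tilde I d) (FI + d) :=
  ⟨add_mem_tilde.not.mpr hFI.1, fun z hz => mem_tilde.mpr (hFI.2 _ (by omega))⟩

lemma add_mem_PF_tilde {S : Set ℤ} {x : ℤ} : x + d ∈ PF S (tilde I d) ↔ x ∈ PF S I := by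
  simp only [PF, subI, mem_sdiff, mem_ofPred_eq, add_mem_tilde, add_right_comm x d]

end Tilde

namespace IsNumSgrp

variable {S : Set ℤ} (hS : IsNumSgrp S)
include hS

lemma pos_of_mem_maxId {m : ℤ} (hm : m ∈ maxId S) : 0 < m :=
  lt_of_le_of_ne (hS.2.2.1 m hm.1) (Ne.symm hm.2)

lemma add_maxId_mem_subI {u m : ℤ} (hu : u ∈ subI S (maxId S)) (hm : m ∈ maxId S) :
    u + m ∈ subI S (maxId S) := fun m' hm' =>
  hS.2.1 _ (hu m hm) m' hm'.1

end IsNumSgrp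

lemma zero_mem_subI_maxId (S : Set ℤ) : (0 : ℤ) ∈ subI S (maxId S) := fun m hm => by
  simpa using hm.1

lemma mem_stdK_union_singleton_iff {S : Set ℤ} {F w : ℤ} (hF : IsFrobOf S F) :
    w ∈ stdK S F ∪ {F} ↔ F - w ∉ maxId S := by
  simp only [stdK, maxId, mem_union, mem_ofPred_eq, mem_singleton_iff, mem_sdiff, not_and,
    not_not]
  constructor
  · rintro (⟨-, hw⟩ | rfl)
    · exact fun h => absurd h hw
    · simp
  · intro h
    by_cases hw : F - w = 0
    · right; omega
    · have hwS : F - w ∉ S := fun hs => hw (h hs)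
      exact Or.inl ⟨not_lt.mp fun hw0 => hwS (hF.2 _ (by omega)), hwS⟩

section FrobeniusF

variable {S J : Set ℤ} {F : ℤ}

lemma subI_maxId_subset_stdK_union (hF : IsFrobOf S F) (hJ : IsFrobOf J F) :
    subI J (maxId S) ⊆ stdK S F ∪ {F} := fun w hw => by
  rw [mem_stdK_union_singleton_iff hF]
  exact fun hm => hJ.1 (by simpa using hw _ hm)

lemma subI_maxId_eq_stdK_union_iff (hS : IsNumSgrp S) (hF : IsFrobOf S F)
    (hJ : IsFrobOf J F) :
    subI J (maxId S) = stdK S F ∪ {F} ↔ ∀ y ∉ J, F - y ∈ subI S (maxId S) := by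
  constructor
  · intro h y hy m hm
    by_contra hym
    have hw : y - m ∈ subI J (maxId S) := by
      rw [h, mem_stdK_union_singleton_iff hF, show F - (y - m) = F - y + m by ring]
      exact fun h' => hym h'.1
    exact hy (by simpa using hw m hm)
  · intro h
    refine (subI_maxId_subset_stdK_union hF hJ).antisymm fun w hw m hm => ?_
    rw [mem_stdK_union_singleton_iff hF] at hw
    by_contra hwm
    have hwF : w ≠ F := by
      rintro rfl
      exact hwm (hJ.2 _ (by linarith [hS.pos_of_mem_maxId hm]))
    refine hw ⟨?_, mt sub_eq_zero.mp hwF.symm⟩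
    simpa [show F - (w + m) + m = F - w by ring] using h _ hwm m hm

lemma forall_gap_frob_sub_mem_subI_iff (hS : IsNumSgrp S) (hJ : IsFrobOf J F) :
    (∀ y ∉ J, F - y ∈ subI S (maxId S)) ↔ ∀ y ∈ PF S J \ {F}, F - y ∈ PF S S := by
  constructor
  · rintro h y ⟨⟨hyM, hyJ⟩, hyF⟩
    refine ⟨h y hyJ, fun hyS => hJ.1 ?_⟩
    simpa using hyM (F - y) ⟨hyS, mt sub_eq_zero.mp (Ne.symm hyF)⟩
  · intro h
    by_contra! hbad
    obtain ⟨y, ⟨hyJ, hy⟩, hmax⟩ := Int.exists_greatest_of_bdd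
      ⟨F, fun z hz => not_lt.mp fun hFz => hz.1 (hJ.2 z hFz)⟩ hbad
    have hyF : y ≠ F := by
      rintro rfl
      simp [zero_mem_subI_maxId] at hy
    have hyPF : y ∈ PF S J := by
      refine ⟨fun m hm => ?_, hyJ⟩
      by_contra hymJ
      have hym : F - (y + m) ∈ subI S (maxId S) := by
        by_contra hym
        linarith [hmax _ ⟨hymJ, hym⟩, hS.pos_of_mem_maxId hm]
      have := hS.add_maxId_mem_subI hym hm
      rw [sub_add_eq_sub_sub, sub_add_cancel] at this
      exact hy this
    exact hy (h y ⟨hyPF, hyF⟩).1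

end FrobeniusF

theorem stmt6_general (S : Set ℤ) (hS : IsNumSgrp S) (F : ℤ) (hF : IsFrobOf S F)
    (I : Set ℤ) (FI : ℤ) (hFI : IsFrobOf I FI) :
    IsAlmostCanonical S F I ↔
      ∀ x ∈ PF S I \ {FI}, FI - x ∈ PF S S := by
  have hJ : IsFrobOf (tilde I (F - FI)) F := by simpa using hFI.tilde (d := F - FI)
  have hAC : IsAlmostCanonical S F I ↔
      subI (tilde I (F - FI)) (maxId S) = stdK S F ∪ {F} :=
    ⟨fun ⟨_, hFI', h⟩ => hFI'.unique hFI ▸ h, fun h => ⟨FI, hFI, h⟩⟩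
  rw [hAC, subI_maxId_eq_stdK_union_iff hS hF hJ, forall_gap_frob_sub_mem_subI_iff hS hJ]
  refine ((Equiv.addRight (F - FI)).forall_congr fun x => ?_).symm
  simp only [Equiv.coe_addRight, mem_sdiff, mem_singleton_iff, add_mem_PF_tilde]
  rw [show F - (x + (F - FI)) = FI - x by ring, show x + (F - FI) = F ↔ x = FI by omega]

theorem stmt6 (S : Set ℤ) (hS : IsNumSgrp S) (F : ℤ) (hF : IsFrobOf S F) (hFpos : 0 < F)
    (I : Set ℤ) (hI : IsRelIdeal S I) (FI : ℤ) (hFI : IsFrobOf I FI) :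
    IsAlmostCanonical S F I ↔
      ∀ x ∈ PF S I \ {FI}, FI - x ∈ PF S S :=
  stmt6_general S hS F hF I FI hFI
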